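/- Let F(a, z) be the generalized polynomial of class P(N, α) with coefficient vector a, and let a, a′ be two coefficient vectors with entries in [0, a^*] and a₋₁, a₀, a_N ≥ a_* > 0; set s = α_N + 2. Then for all x, y ∈ ℝ^d: (F(a,|x|)x − F(a′,|y|)y) · (x − y) ≥ C₃ |x − y|^s − C₂ (1 + |x| + |y|)^{s−1} |x − y| |a − a′|, with C₂ = 3N and C₃ = a_*(1−α)/(2^{s−1}(s−1)). -/

import Mathlib

/-!
Write `⟪F(a,|x|)x − F(a′,|y|)y, x − y⟫` as
`⟪F(a,|x|)x − F(a,|y|)y, x − y⟫ + (F(a,|y|) − F(a′,|y|))⟪y, x − y⟫`.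
In the first term every monomial `z ↦ |z|^β z` with `β > −1` is monotone: by Cauchy–Schwarz this
reduces to monotonicity of `r ↦ r^{β+1}`. The top monomial `β = α_N` is even strongly monotone,
`⟪|x|^β x − |y|^β y, x − y⟫ ≥ ½(|x|^β + |y|^β)|x − y|² ≥ 2^{−β−1}|x − y|^{β+2}`, because
`|x − y|^β ≤ 2^β (|x|^β + |y|^β)`. In the second term each of the `N + 2` coefficient differences
is at most `|a − a′|` and multiplies some `|y|^{β+1} ≤ (1 + |x| + |y|)^{s−1}`.
-/

open scoped RealInnerProductSpace

theorem norm_sub_rpow_le {E : Type*} [SeminormedAddCommGroup E] {β : ℝ} (hβ : 0 ≤ β) (x y : E) :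
    ‖x - y‖ ^ β ≤ 2 ^ β * (‖x‖ ^ β + ‖y‖ ^ β) := by
  have hx := Real.rpow_nonneg (norm_nonneg x) β
  have hy := Real.rpow_nonneg (norm_nonneg y) β
  calc ‖x - y‖ ^ β ≤ (2 * max ‖x‖ ‖y‖) ^ β := by
        refine Real.rpow_le_rpow (norm_nonneg _) ((norm_sub_le x y).trans ?_) hβ
        linarith [le_max_left ‖x‖ ‖y‖, le_max_right ‖x‖ ‖y‖]
    _ = 2 ^ β * max ‖x‖ ‖y‖ ^ β := Real.mul_rpow zero_le_two (le_max_of_le_left (norm_nonneg x))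
    _ ≤ 2 ^ β * (‖x‖ ^ β + ‖y‖ ^ β) := by
        gcongr
        rcases le_total ‖x‖ ‖y‖ with h | h
        · rw [max_eq_right h]; exact le_add_of_nonneg_left hx
        · rw [max_eq_left h]; exact le_add_of_nonneg_right hy

section InnerProduct

variable {E : Type*} [NormedAddCommGroup E] [InnerProductSpace ℝ E]

theorem inner_smul_sub_smul_sub_sub (p q : ℝ) (x y : E) :
    ⟪p • x - q • y, x - y⟫ = p * ‖x‖ ^ 2 - (p + q) * ⟪x, y⟫ + q * ‖y‖ ^ 2 := by
  simp only [inner_sub_left, inner_sub_right, real_inner_smul_left, real_inner_self_eq_norm_sq,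
    real_inner_comm x y]
  ring

theorem inner_smul_sub_smul_nonneg {g : ℝ → ℝ} (hg : ∀ r, 0 ≤ r → 0 ≤ g r)
    (hmono : MonotoneOn (fun r => g r * r) (Set.Ici 0)) (x y : E) :
    0 ≤ ⟪g ‖x‖ • x - g ‖y‖ • y, x - y⟫ := by
  have hx := norm_nonneg x
  have hy := norm_nonneg y
  have hxy : 0 ≤ (g ‖x‖ * ‖x‖ - g ‖y‖ * ‖y‖) * (‖x‖ - ‖y‖) := by
    rcases le_total ‖x‖ ‖y‖ with h | h
    · exact mul_nonneg_of_nonpos_of_nonpos (sub_nonpos.2 (hmono hx hy h)) (sub_nonpos.2 h)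
    · exact mul_nonneg (sub_nonneg.2 (hmono hy hx h)) (sub_nonneg.2 h)
  rw [inner_smul_sub_smul_sub_sub]
  nlinarith [mul_le_mul_of_nonneg_left (real_inner_le_norm x y) (add_nonneg (hg _ hx) (hg _ hy))]

theorem inner_rpow_smul_sub_rpow_smul_nonneg {β : ℝ} (hβ : -1 < β) (x y : E) :
    0 ≤ ⟪‖x‖ ^ β • x - ‖y‖ ^ β • y, x - y⟫ := by
  refine inner_smul_sub_smul_nonneg (fun r hr => Real.rpow_nonneg hr β) ?_ x y
  intro r hr t ht hrt
  have hβ1 : β + 1 ≠ 0 := by linarith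
  change r ^ β * r ≤ t ^ β * t
  rw [← Real.rpow_add_one' hr hβ1, ← Real.rpow_add_one' ht hβ1]
  exact Real.rpow_le_rpow hr hrt (by linarith)

theorem norm_sub_rpow_div_le_inner {β : ℝ} (hβ : 0 ≤ β) (x y : E) :
    ‖x - y‖ ^ (β + 2) / 2 ^ (β + 1) ≤ ⟪‖x‖ ^ β • x - ‖y‖ ^ β • y, x - y⟫ := by
  set P := ‖x‖ ^ β
  set Q := ‖y‖ ^ β
  have hsame : 0 ≤ (P - Q) * (‖x‖ ^ 2 - ‖y‖ ^ 2) := by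
    rcases le_total ‖x‖ ‖y‖ with h | h
    · exact mul_nonneg_of_nonpos_of_nonpos
        (sub_nonpos.2 (Real.rpow_le_rpow (norm_nonneg x) h hβ))
        (sub_nonpos.2 (pow_le_pow_left₀ (norm_nonneg x) h 2))
    · exact mul_nonneg (sub_nonneg.2 (Real.rpow_le_rpow (norm_nonneg y) h hβ))
        (sub_nonneg.2 (pow_le_pow_left₀ (norm_nonneg y) h 2))
  have hsplit : ⟪P • x - Q • y, x - y⟫ =
      (P + Q) * ‖x - y‖ ^ 2 / 2 + (P - Q) * (‖x‖ ^ 2 - ‖y‖ ^ 2) / 2 := by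
    rw [inner_smul_sub_smul_sub_sub, norm_sub_sq_real]
    ring
  have hpow : ‖x - y‖ ^ (β + 2) / 2 ^ (β + 1) = ‖x - y‖ ^ β * ‖x - y‖ ^ 2 / (2 ^ β * 2) := by
    rw [Real.rpow_add_of_nonneg (norm_nonneg _) hβ zero_le_two,
      Real.rpow_add_one two_ne_zero, Real.rpow_two]
  rw [hsplit, hpow, div_le_iff₀ (by positivity)]
  nlinarith [mul_le_mul_of_nonneg_right (norm_sub_rpow_le hβ x y) (sq_nonneg ‖x - y‖),
    mul_nonneg (Real.rpow_nonneg zero_le_two β) hsame]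

theorem inner_smul_sub_smul_sub_le (f g : ℝ → ℝ) (x y : E) :
    ⟪f ‖x‖ • x - f ‖y‖ • y, x - y⟫ - |f ‖y‖ - g ‖y‖| * ‖y‖ * ‖x - y‖ ≤
      ⟪f ‖x‖ • x - g ‖y‖ • y, x - y⟫ := by
  have hsplit : f ‖x‖ • x - g ‖y‖ • y = (f ‖x‖ • x - f ‖y‖ • y) + (f ‖y‖ - g ‖y‖) • y := by
    rw [sub_smul]; abel
  have hpert : -(|f ‖y‖ - g ‖y‖| * (‖y‖ * ‖x - y‖)) ≤ (f ‖y‖ - g ‖y‖) * ⟪y, x - y⟫ := by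
    refine (neg_le_neg ?_).trans (neg_abs_le _)
    rw [abs_mul]
    exact mul_le_mul_of_nonneg_left (abs_real_inner_le_norm y (x - y)) (abs_nonneg _)
  rw [hsplit, inner_add_left, real_inner_smul_left]
  linarith

end InnerProduct

/-- `F(a, z) = ∑ⱼ aⱼ z^{pⱼ}`; the constant term has exponent `0`, as `0 ^ 0 = 1` for `Real.rpow`. -/
noncomputable def genPoly {ι : Type*} [Fintype ι] (a p : ι → ℝ) (z : ℝ) : ℝ :=
  ∑ j, a j * z ^ p j

section GenPoly

variable {ι : Type*} [Fintype ι] {E : Type*} [NormedAddCommGroup E] [InnerProductSpace ℝ E]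

theorem inner_genPoly_smul_sub (a p : ι → ℝ) (x y : E) :
    ⟪genPoly a p ‖x‖ • x - genPoly a p ‖y‖ • y, x - y⟫ =
      ∑ j, a j * ⟪‖x‖ ^ p j • x - ‖y‖ ^ p j • y, x - y⟫ := by
  simp only [genPoly, Finset.sum_smul, ← Finset.sum_sub_distrib, sum_inner, mul_smul,
    ← smul_sub, real_inner_smul_left]

theorem mul_norm_sub_rpow_div_le_inner_genPoly {a p : ι → ℝ} (ha : ∀ j, 0 ≤ a j)
    (hp : ∀ j, -1 < p j) {k : ι} (hpk : 0 ≤ p k) (x y : E) :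
    a k * (‖x - y‖ ^ (p k + 2) / 2 ^ (p k + 1)) ≤
      ⟪genPoly a p ‖x‖ • x - genPoly a p ‖y‖ • y, x - y⟫ := by
  rw [inner_genPoly_smul_sub]
  calc a k * (‖x - y‖ ^ (p k + 2) / 2 ^ (p k + 1))
      ≤ a k * ⟪‖x‖ ^ p k • x - ‖y‖ ^ p k • y, x - y⟫ :=
        mul_le_mul_of_nonneg_left (norm_sub_rpow_div_le_inner hpk x y) (ha k)
    _ ≤ ∑ j, a j * ⟪‖x‖ ^ p j • x - ‖y‖ ^ p j • y, x - y⟫ :=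
        Finset.single_le_sum (f := fun j => a j * ⟪‖x‖ ^ p j • x - ‖y‖ ^ p j • y, x - y⟫)
          (fun j _ => mul_nonneg (ha j) (inner_rpow_smul_sub_rpow_smul_nonneg (hp j) x y))
          (Finset.mem_univ k)

theorem abs_genPoly_sub_genPoly_mul_le {a a' p : ι → ℝ} {δ t r R : ℝ}
    (hδ : ∀ j, |a j - a' j| ≤ δ) (hp : ∀ j, -1 < p j ∧ p j + 1 ≤ t)
    (hr : 0 ≤ r) (hrR : r ≤ R) (hR : 1 ≤ R) :
    |genPoly a p r - genPoly a' p r| * r ≤ Fintype.card ι * δ * R ^ t := by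
  have hterm : ∀ j, |a j - a' j| * r ^ p j * r ≤ δ * R ^ t := fun j => by
    rw [mul_assoc, ← Real.rpow_add_one' hr (by linarith [(hp j).1])]
    refine mul_le_mul (hδ j) ?_ (by positivity) ((abs_nonneg _).trans (hδ j))
    calc r ^ (p j + 1) ≤ R ^ (p j + 1) := Real.rpow_le_rpow hr hrR (by linarith [(hp j).1])
      _ ≤ R ^ t := Real.rpow_le_rpow_of_exponent_le hR (hp j).2
  calc |genPoly a p r - genPoly a' p r| * r
      = |∑ j, (a j - a' j) * r ^ p j| * r := by
        simp only [genPoly, ← Finset.sum_sub_distrib, sub_mul]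
    _ ≤ (∑ j, |a j - a' j| * r ^ p j) * r := by
        refine mul_le_mul_of_nonneg_right ((Finset.abs_sum_le_sum_abs _ _).trans_eq ?_) hr
        simp only [abs_mul, abs_of_nonneg (Real.rpow_nonneg hr _)]
    _ ≤ Fintype.card ι * δ * R ^ t := by
        rw [Finset.sum_mul, mul_assoc]
        simpa using Finset.sum_le_sum fun j (_ : j ∈ Finset.univ) => hterm j

theorem inner_genPoly_smul_sub_genPoly_smul_ge {a a' p : ι → ℝ} {δ : ℝ} {k : ι}
    (ha : ∀ j, 0 ≤ a j) (hδ : ∀ j, |a j - a' j| ≤ δ) (hp : ∀ j, p j ∈ Set.Ioc (-1) (p k))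
    (hpk : 0 ≤ p k) (x y : E) :
    a k * (‖x - y‖ ^ (p k + 2) / 2 ^ (p k + 1)) -
        Fintype.card ι * δ * (1 + ‖x‖ + ‖y‖) ^ (p k + 1) * ‖x - y‖ ≤
      ⟪genPoly a p ‖x‖ • x - genPoly a' p ‖y‖ • y, x - y⟫ := by
  have hcoer := mul_norm_sub_rpow_div_le_inner_genPoly ha (fun j => (hp j).1) hpk x y
  have hpert := abs_genPoly_sub_genPoly_mul_le (a' := a') (t := p k + 1) hδ
    (fun j => ⟨(hp j).1, by linarith [(hp j).2]⟩) (norm_nonneg y)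
    (show ‖y‖ ≤ 1 + ‖x‖ + ‖y‖ by linarith [norm_nonneg x])
    (show 1 ≤ 1 + ‖x‖ + ‖y‖ by linarith [norm_nonneg x, norm_nonneg y])
  exact (sub_le_sub hcoer (mul_le_mul_of_nonneg_right hpert (norm_nonneg _))).trans
    (inner_smul_sub_smul_sub_le _ _ x y)

end GenPoly

theorem genPoly_fin_cons_cons {N : ℕ} (a : Fin (N + 2) → ℝ) (q : ℝ) (e : Fin N → ℝ) (z : ℝ) :
    genPoly a (Fin.cons q (Fin.cons 0 e : Fin (N + 1) → ℝ)) z =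
      a 0 * z ^ q + a 1 + ∑ i : Fin N, a ⟨i.1 + 2, Nat.add_lt_add_right i.isLt 2⟩ * z ^ (e i) := by
  simp only [genPoly, Fin.sum_univ_succ, Fin.cons_zero, Fin.cons_succ, Real.rpow_zero, mul_one]
  exact (add_assoc _ _ _).symm

theorem fin_cons_cons_mem_Ioc {N : ℕ} {q : ℝ} {e : Fin N → ℝ} {k : Fin N} (hq : -1 < q)
    (hqk : q ≤ e k) (he : ∀ i, 0 < e i ∧ e i ≤ e k) (j : Fin (N + 2)) :
    (Fin.cons q (Fin.cons 0 e : Fin (N + 1) → ℝ) : Fin (N + 2) → ℝ) j ∈ Set.Ioc (-1) (e k) := by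
  refine Fin.cases ⟨hq, hqk⟩ (Fin.cases ?_ fun i => ?_) j
  · simp only [Fin.cons_succ, Fin.cons_zero]; constructor <;> linarith [he k]
  · simp only [Fin.cons_succ]; constructor <;> linarith [he i]

theorem mul_one_sub_div_mul_le_div {c α b t : ℝ} (hc : 0 ≤ c) (hα : 0 ≤ α) (hb : 0 < b)
    (ht : 1 ≤ t) : c * (1 - α) / (b * t) ≤ c / b := by
  rw [mul_comm b, ← div_div, div_le_div_iff_of_pos_right hb, div_le_iff₀ (by linarith)]
  nlinarith

theorem stmt12 (d : ℕ) (N : ℕ) (hN : 1 ≤ N)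
    (α : ℝ) (hα0 : 0 < α) (hα1 : α < 1)
    (e : Fin N → ℝ) (hmono : StrictMono e) (hepos : ∀ i, 0 < e i)
    (astar asup : ℝ) (hstar : 0 < astar)
    (aa aa' : EuclideanSpace ℝ (Fin (N + 2)))
    (haa : ∀ i, 0 ≤ aa i ∧ aa i ≤ asup)
    (hL : astar ≤ aa ⟨N + 1, by omega⟩)
    (F1 F2 : ℝ → ℝ)
    (hF1 : F1 = fun z => aa 0 * z ^ (-α) + aa 1 +
      ∑ i : Fin N, aa ⟨i.1 + 2, Nat.add_lt_add_right i.isLt 2⟩ * z ^ (e i))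
    (hF2 : F2 = fun z => aa' 0 * z ^ (-α) + aa' 1 +
      ∑ i : Fin N, aa' ⟨i.1 + 2, Nat.add_lt_add_right i.isLt 2⟩ * z ^ (e i))
    (s : ℝ) (hs : s = e ⟨N - 1, by omega⟩ + 2) :
    ∀ x y : EuclideanSpace ℝ (Fin d),
      ⟪F1 ‖x‖ • x - F2 ‖y‖ • y, x - y⟫ ≥
        astar * (1 - α) / (2 ^ (s - 1) * (s - 1)) * ‖x - y‖ ^ s -
          3 * (N : ℝ) * (1 + ‖x‖ + ‖y‖) ^ (s - 1) * ‖x - y‖ * ‖aa - aa'‖ := by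
  intro x y
  set p : Fin (N + 2) → ℝ := Fin.cons (-α) (Fin.cons 0 e : Fin (N + 1) → ℝ)
  set top : Fin N := ⟨N - 1, by omega⟩
  have hF1p : F1 = genPoly aa p := hF1 ▸ funext fun z => (genPoly_fin_cons_cons aa _ e z).symm
  have hF2p : F2 = genPoly aa' p := hF2 ▸ funext fun z => (genPoly_fin_cons_cons aa' _ e z).symm
  have hp : ∀ j, p j ∈ Set.Ioc (-1) (p top.succ.succ) := fun j => by
    simpa only [p, Fin.cons_succ] using fin_cons_cons_mem_Ioc (by linarith)
      (by linarith [hepos top]) (fun i => ⟨hepos i, hmono.monotone (Nat.le_sub_one_of_lt i.isLt)⟩) j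
  have htop : p top.succ.succ = s - 2 := by
    simp only [p, Fin.cons_succ]
    rw [hs]; ring
  have hak : astar ≤ aa top.succ.succ := by
    convert hL using 2
    ext
    simp only [top, Fin.val_succ]
    omega
  have key := inner_genPoly_smul_sub_genPoly_smul_ge (fun j => (haa j).1)
    (fun j => by simpa using PiLp.norm_apply_le (aa - aa') j) hp
    (by rw [htop, hs]; linarith [hepos top]) x y
  rw [htop, show s - 2 + 2 = s by ring, show s - 2 + 1 = s - 1 by ring] at key
  simp only [Fintype.card_fin, Nat.cast_add, Nat.cast_ofNat] at key
  have hconst := mul_one_sub_div_mul_le_div hstar.le hα0.le (Real.rpow_pos_of_pos two_pos (s - 1))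
    (show 1 ≤ s - 1 by linarith [hepos top])
  have hN3 : ((N : ℝ) + 2) ≤ 3 * N := by
    have : (1 : ℝ) ≤ N := by exact_mod_cast hN
    linarith
  rw [hF1p, hF2p, ge_iff_le]
  refine le_trans ?_ key
  gcongr ?_ - ?_
  · calc _ ≤ astar / 2 ^ (s - 1) * ‖x - y‖ ^ s := by gcongr
      _ ≤ _ := by rw [div_mul_eq_mul_div, mul_div_assoc]; gcongr
  · have := mul_le_mul_of_nonneg_right hN3
      (by positivity : 0 ≤ ‖aa - aa'‖ * (1 + ‖x‖ + ‖y‖) ^ (s - 1) * ‖x - y‖)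
    linarith
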